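/- Let b ∈ L¹(ℝ) be supported in an interval I with ∫ b = 0, and let g ∈ L¹ ∩ L^∞(ℝ) with ‖g‖_{L^∞} ≤ 2 and ‖g‖_{L¹} ≤ 1. Then for ρ ≥ 1 and every x outside the concentric triple Ĩ of I, the ρ-variation of the family {Q_t(b,g)(x)}_{t>0} satisfies V_ρ(Q(b,g))(x) ≤ C ‖b‖_{L¹} (d(x,I) + |I|) / d(x,I)². -/

import Mathlib

/-!
Write `Q_t(b,g)(x) = t⁻² G(t) B(t)` with `B(t) = ∫_{|y| ≤ t/2} b(x - y) dy` and `G(t)` the same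
integral of `g`. With `d = d(x,I)` and `D = d + |I|`, the support of `b(x - ·)` lies in
`d ≤ |y| ≤ D`, so `B(t) = 0` for `t ≤ 2d`, and `B(t) = ∫ b = 0` for `t ≥ 2D`. Hence `Q_t` only
changes on `[2d, 2D]`, where `|t⁻² G(t)| ≤ 1/d` because `G` is `2`-Lipschitz with `G(0) = 0`.

Say that `Ψ : ℝ → ℝ` controls `a` if `|a(t) - a(s)| ≤ Ψ(t) - Ψ(s)` for `s ≤ t`; then every
`ρ`-variation of `a` with `ρ ≥ 1` is at most the oscillation of `Ψ`, and a product `uv` is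
controlled by `sup|u| Ψ_v + sup|v| Ψ_u`. Here `B` is controlled by
`t ↦ ∫_{|y| ≤ t/2} |b(x - y)| dy`, of oscillation `≤ ‖b‖₁`, and `t⁻² G(t)` on `[2d, 2D]` by
`(2d)⁻² · 2t - 4D t⁻²`, of oscillation `≤ 2D/d² - 1/d`. Together these give
`V_ρ(Q(b,g))(x) ≤ ‖b‖₁/d + ‖b‖₁ (2D/d² - 1/d) = 2 ‖b‖₁ D/d²`.
-/

open MeasureTheory Set ENNReal NNReal

/-- The ρ-variation norm of a family `a : ι → E` sampled along finite increasing
systems of indices lying in `S`. -/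
noncomputable def varNorm {ι E : Type*} [Preorder ι] [SeminormedAddGroup E]
    (ρ : ℝ) (S : Set ι) (a : ι → E) : ℝ≥0∞ :=
  ⨆ (n : ℕ) (t : Fin (n + 1) → ι) (_ : StrictMono t) (_ : ∀ i, t i ∈ S),
    (∑ i : Fin n, (‖a (t i.succ) - a (t i.castSucc)‖₊ : ℝ≥0∞) ^ ρ) ^ (1 / ρ)

/-- The bilinear average over the cube of side `t` centered at `(x,x)`. -/
noncomputable def Qbil (f g : ℝ → ℂ) (t x : ℝ) : ℂ :=
  ((t : ℂ) ^ 2)⁻¹ *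
    ∫ y in Set.Icc (-(t / 2)) (t / 2), ∫ z in Set.Icc (-(t / 2)) (t / 2),
      f (x - y) * g (x - z)

open Metric Function

theorem ENNReal.rpow_sum_rpow_le_sum {α : Type*} (s : Finset α) (f : α → ℝ≥0∞) {p : ℝ}
    (hp : 1 ≤ p) : (∑ i ∈ s, f i ^ p) ^ (1 / p) ≤ ∑ i ∈ s, f i := by
  classical
  have hp0 : 0 < p := by linarith
  induction s using Finset.induction with
  | empty => simp [hp0]
  | insert i s hi ih =>
    rw [Finset.sum_insert hi, Finset.sum_insert hi]
    calc (f i ^ p + ∑ j ∈ s, f j ^ p) ^ (1 / p)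
        = (f i ^ p + ((∑ j ∈ s, f j ^ p) ^ (1 / p)) ^ p) ^ (1 / p) := by
          rw [← ENNReal.rpow_mul, one_div_mul_cancel hp0.ne', ENNReal.rpow_one]
      _ ≤ f i + (∑ j ∈ s, f j ^ p) ^ (1 / p) := ENNReal.rpow_add_rpow_le_add _ _ hp
      _ ≤ f i + ∑ j ∈ s, f j := by gcongr

theorem Fin.sum_succ_sub_castSucc {G : Type*} [AddCommGroup G] :
    ∀ {n : ℕ} (F : Fin (n + 1) → G), ∑ i : Fin n, (F i.succ - F i.castSucc) = F (Fin.last n) - F 0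
  | 0, _ => by simp
  | n + 1, F => by
    have ih := Fin.sum_succ_sub_castSucc fun i => F i.castSucc
    rw [Fin.sum_univ_castSucc]
    simp only [Fin.succ_castSucc] at ih ⊢
    rw [ih]
    simp only [Fin.succ_last, Fin.castSucc_zero]
    abel

def DominatesIncrementsOn {ι E : Type*} [Preorder ι] [SeminormedAddGroup E]
    (Ψ : ι → ℝ) (a : ι → E) (S : Set ι) : Prop :=
  ∀ ⦃s⦄, s ∈ S → ∀ ⦃t⦄, t ∈ S → s ≤ t → ‖a t - a s‖ ≤ Ψ t - Ψ s

namespace DominatesIncrementsOn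

variable {ι E : Type*} [Preorder ι] {Ψ : ι → ℝ} {S : Set ι}

theorem mono [SeminormedAddGroup E] {a : ι → E} (h : DominatesIncrementsOn Ψ a S) {T : Set ι}
    (hT : T ⊆ S) : DominatesIncrementsOn Ψ a T :=
  fun _ hs _ ht hst => h (hT hs) (hT ht) hst

theorem monotoneOn [SeminormedAddGroup E] {a : ι → E} (h : DominatesIncrementsOn Ψ a S) :
    MonotoneOn Ψ S :=
  fun _ hs _ ht hst => sub_nonneg.1 ((norm_nonneg _).trans (h hs ht hst))

theorem comp_monotone [SeminormedAddGroup E] {a : ι → E} (h : DominatesIncrementsOn Ψ a S)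
    {κ : Type*} [Preorder κ] {c : κ → ι} (hc : Monotone c) {T : Set κ} (hcT : MapsTo c T S) :
    DominatesIncrementsOn (Ψ ∘ c) (a ∘ c) T :=
  fun _ hs _ ht hst => h (hcT hs) (hcT ht) (hc hst)

theorem smul {𝕜 : Type*} [SeminormedRing 𝕜] [SeminormedAddCommGroup E] [Module 𝕜 E]
    [IsBoundedSMul 𝕜 E] {u : ι → 𝕜} {v : ι → E} {Ψu Ψv : ι → ℝ} {K L : ℝ}
    (hu : DominatesIncrementsOn Ψu u S) (hv : DominatesIncrementsOn Ψv v S)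
    (hK : ∀ t ∈ S, ‖u t‖ ≤ K) (hL : ∀ t ∈ S, ‖v t‖ ≤ L) :
    DominatesIncrementsOn (fun t => K * Ψv t + L * Ψu t) (fun t => u t • v t) S := by
  intro s hs t ht hst
  have hK0 : 0 ≤ K := (norm_nonneg _).trans (hK t ht)
  have hsplit : u t • v t - u s • v s = u t • (v t - v s) + (u t - u s) • v s := by
    rw [smul_sub, sub_smul]; abel
  calc ‖u t • v t - u s • v s‖ ≤ ‖u t‖ * ‖v t - v s‖ + ‖u t - u s‖ * ‖v s‖ := by
        rw [hsplit]
        exact (norm_add_le _ _).trans (add_le_add (norm_smul_le _ _) (norm_smul_le _ _))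
    _ ≤ K * (Ψv t - Ψv s) + (Ψu t - Ψu s) * L :=
        add_le_add (mul_le_mul (hK t ht) (hv hs ht hst) (norm_nonneg _) hK0)
          (mul_le_mul (hu hs ht hst) (hL s hs) (norm_nonneg _)
            ((norm_nonneg _).trans (hu hs ht hst)))
    _ = K * Ψv t + L * Ψu t - (K * Ψv s + L * Ψu s) := by ring

end DominatesIncrementsOn

theorem AntitoneOn.dominatesIncrementsOn_neg {ι : Type*} [Preorder ι] {u : ι → ℝ} {S : Set ι}
    (hu : AntitoneOn u S) : DominatesIncrementsOn (-u) u S := by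
  intro s hs t ht hst
  rw [Real.norm_eq_abs, abs_of_nonpos (sub_nonpos.2 (hu hs ht hst))]
  simp

theorem norm_le_mul_of_dominatesIncrementsOn {E : Type*} [SeminormedAddGroup E] {G : ℝ → E}
    {M : ℝ} (hG : DominatesIncrementsOn (fun t => M * t) G (Ici 0)) (hG0 : G 0 = 0) {t : ℝ}
    (ht : 0 ≤ t) : ‖G t‖ ≤ M * t := by
  simpa [hG0] using hG (mem_Ici.2 le_rfl) ht ht

theorem varNorm_le_of_dominatesIncrementsOn {ι E : Type*} [Preorder ι] [SeminormedAddGroup E]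
    {ρ : ℝ} (hρ : 1 ≤ ρ) {S : Set ι} {a : ι → E} {Ψ : ι → ℝ} {V : ℝ}
    (ha : DominatesIncrementsOn Ψ a S) (hV : ∀ s ∈ S, ∀ t ∈ S, s ≤ t → Ψ t - Ψ s ≤ V) :
    varNorm ρ S a ≤ ENNReal.ofReal V := by
  refine iSup_le fun n => iSup_le fun t => iSup_le fun ht => iSup_le fun htS => ?_
  calc (∑ i : Fin n, (‖a (t i.succ) - a (t i.castSucc)‖₊ : ℝ≥0∞) ^ ρ) ^ (1 / ρ)
      ≤ ∑ i : Fin n, (‖a (t i.succ) - a (t i.castSucc)‖₊ : ℝ≥0∞) :=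
        ENNReal.rpow_sum_rpow_le_sum _ _ hρ
    _ = ENNReal.ofReal (∑ i : Fin n, ‖a (t i.succ) - a (t i.castSucc)‖) := by
        rw [ENNReal.ofReal_sum_of_nonneg fun i _ => norm_nonneg _]
        simp only [ofReal_norm, enorm_eq_nnnorm]
    _ ≤ ENNReal.ofReal (∑ i : Fin n, (Ψ (t i.succ) - Ψ (t i.castSucc))) := by
        gcongr with i
        exact ha (htS _) (htS _) (ht Fin.castSucc_lt_succ).le
    _ = ENNReal.ofReal (Ψ (t (Fin.last n)) - Ψ (t 0)) :=
        congrArg ENNReal.ofReal (Fin.sum_succ_sub_castSucc fun i => Ψ (t i))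
    _ ≤ ENNReal.ofReal V := by
        gcongr
        exact hV _ (htS 0) _ (htS _) (ht.monotone (Fin.zero_le _))

theorem varNorm_smul_le {ι 𝕜 E : Type*} [Preorder ι] [SeminormedRing 𝕜] [SeminormedAddCommGroup E]
    [Module 𝕜 E] [IsBoundedSMul 𝕜 E] {ρ : ℝ} (hρ : 1 ≤ ρ) {S : Set ι} {u : ι → 𝕜} {v : ι → E}
    {Ψu Ψv : ι → ℝ} {K L A B : ℝ} (hu : DominatesIncrementsOn Ψu u S)
    (hv : DominatesIncrementsOn Ψv v S) (hK : ∀ t ∈ S, ‖u t‖ ≤ K) (hL : ∀ t ∈ S, ‖v t‖ ≤ L)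
    (hA : ∀ s ∈ S, ∀ t ∈ S, s ≤ t → Ψu t - Ψu s ≤ A)
    (hB : ∀ s ∈ S, ∀ t ∈ S, s ≤ t → Ψv t - Ψv s ≤ B) :
    varNorm ρ S (fun t => u t • v t) ≤ ENNReal.ofReal (K * B + L * A) := by
  refine varNorm_le_of_dominatesIncrementsOn hρ (hu.smul hv hK hL) fun s hs t ht hst => ?_
  have hK0 : 0 ≤ K := (norm_nonneg _).trans (hK s hs)
  have hL0 : 0 ≤ L := (norm_nonneg _).trans (hL s hs)
  calc K * Ψv t + L * Ψu t - (K * Ψv s + L * Ψu s) = K * (Ψv t - Ψv s) + L * (Ψu t - Ψu s) := by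
        ring
    _ ≤ K * B + L * A := add_le_add (mul_le_mul_of_nonneg_left (hB s hs t ht hst) hK0)
        (mul_le_mul_of_nonneg_left (hA s hs t ht hst) hL0)

section CenteredIntegral

variable {E : Type*} [NormedAddCommGroup E] [NormedSpace ℝ E]

noncomputable def centeredIntegral (f : ℝ → E) (x t : ℝ) : E :=
  ∫ y in Icc (-(t / 2)) (t / 2), f (x - y)

theorem Qbil_eq_smul_mul (f g : ℝ → ℂ) (t x : ℝ) :
    Qbil f g t x = ((t ^ 2)⁻¹ • centeredIntegral g x t) * centeredIntegral f x t := by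
  simp only [Qbil, centeredIntegral, integral_const_mul, integral_mul_const, Complex.real_smul]
  push_cast
  ring

theorem centeredIntegral_zero (f : ℝ → E) (x : ℝ) : centeredIntegral f x 0 = 0 := by
  simp [centeredIntegral]

theorem centeredIntegral_sub {f : ℝ → E} (hf : Integrable f) (x : ℝ) {s t : ℝ} (hst : s ≤ t) :
    centeredIntegral f x t - centeredIntegral f x s =
      ∫ y in Icc (-(t / 2)) (t / 2) \ Icc (-(s / 2)) (s / 2), f (x - y) :=
  (setIntegral_sdiff measurableSet_Icc (hf.comp_sub_left x).integrableOn
    (Icc_subset_Icc (by linarith) (by linarith))).symm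

theorem dominatesIncrementsOn_centeredIntegral {f : ℝ → E} (hf : Integrable f) (x : ℝ) :
    DominatesIncrementsOn (centeredIntegral (‖f ·‖) x) (centeredIntegral f x) univ := by
  intro s _ t _ hst
  rw [centeredIntegral_sub hf x hst, centeredIntegral_sub hf.norm x hst]
  exact norm_integral_le_integral_norm _

theorem dominatesIncrementsOn_centeredIntegral_of_norm_le {f : ℝ → E} (hf : Integrable f) {M : ℝ}
    (hM : ∀ᵐ y, ‖f y‖ ≤ M) (x : ℝ) :
    DominatesIncrementsOn (fun t => M * t) (centeredIntegral f x) (Ici 0) := by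
  intro s (hs : 0 ≤ s) t _ hst
  have hvol : volume.real (Icc (-(t / 2)) (t / 2) \ Icc (-(s / 2)) (s / 2)) = t - s := by
    rw [measureReal_sdiff (Icc_subset_Icc (by linarith) (by linarith)) measurableSet_Icc
      measure_Icc_lt_top.ne, Real.volume_real_Icc, Real.volume_real_Icc,
      max_eq_left (by linarith), max_eq_left (by linarith)]
    ring
  have hM' : ∀ᵐ y, ‖f (x - y)‖ ≤ M :=
    (Measure.measurePreserving_sub_left volume x).quasiMeasurePreserving.ae hM
  rw [centeredIntegral_sub hf x hst, ← mul_sub, ← hvol]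
  exact norm_setIntegral_le_of_norm_le_const_ae
    ((measure_mono sdiff_subset).trans_lt measure_Icc_lt_top)
    (ae_restrict_of_ae hM')

theorem centeredIntegral_nonneg {φ : ℝ → ℝ} (hφ : 0 ≤ φ) (x t : ℝ) : 0 ≤ centeredIntegral φ x t :=
  setIntegral_nonneg measurableSet_Icc fun _ _ => hφ _

theorem centeredIntegral_le_integral {φ : ℝ → ℝ} (hφ : Integrable φ) (h0 : 0 ≤ φ) (x t : ℝ) :
    centeredIntegral φ x t ≤ ∫ y, φ y := by
  rw [centeredIntegral, ← integral_sub_left_eq_self φ volume x]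
  exact setIntegral_le_integral (hφ.comp_sub_left x) (ae_of_all _ fun y => h0 (x - y))

theorem norm_centeredIntegral_le {f : ℝ → E} (hf : Integrable f) (x t : ℝ) :
    ‖centeredIntegral f x t‖ ≤ ∫ y, ‖f y‖ :=
  (norm_integral_le_integral_norm _).trans
    (centeredIntegral_le_integral hf.norm (fun y => norm_nonneg (f y)) x t)

theorem centeredIntegral_eq_zero_of_le_dist {f : ℝ → E} {x r t : ℝ}
    (hf : ∀ y ∈ support f, r ≤ dist x y) (ht : t ≤ 2 * r) : centeredIntegral f x t = 0 := by
  rw [centeredIntegral, integral_Icc_eq_integral_Ioo]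
  refine setIntegral_eq_zero_of_forall_eq_zero fun y hy => ?_
  by_contra hne
  have h := hf (x - y) hne
  rw [Real.dist_eq, sub_sub_self, le_abs] at h
  rcases hy with ⟨hy₁, hy₂⟩
  rcases h with h | h <;> linarith

theorem centeredIntegral_eq_integral {f : ℝ → E} {x R t : ℝ} (hf : support f ⊆ closedBall x R)
    (ht : 2 * R ≤ t) : centeredIntegral f x t = ∫ y, f y := by
  rw [centeredIntegral, setIntegral_eq_integral_of_forall_compl_eq_zero, integral_sub_left_eq_self]
  intro y hy
  by_contra hne
  have h := mem_closedBall'.1 (hf hne)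
  rw [Real.dist_eq, sub_sub_self, abs_le] at h
  exact hy ⟨by linarith, by linarith⟩

end CenteredIntegral

section InvSqSmul

variable {E : Type*} [SeminormedAddCommGroup E] [NormedSpace ℝ E] {G : ℝ → E} {M : ℝ}

theorem norm_inv_sq_smul_le (hG : DominatesIncrementsOn (fun t => M * t) G (Ici 0))
    (hG0 : G 0 = 0) {t : ℝ} (ht : 0 < t) : ‖(t ^ 2)⁻¹ • G t‖ ≤ M / t := by
  rw [norm_smul, norm_inv, norm_pow, Real.norm_of_nonneg ht.le, inv_mul_le_iff₀ (by positivity)]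
  calc ‖G t‖ ≤ M * t := norm_le_mul_of_dominatesIncrementsOn hG hG0 ht.le
    _ = t ^ 2 * (M / t) := by field_simp

theorem dominatesIncrementsOn_inv_sq_smul {α β : ℝ} (hα : 0 < α)
    (hG : DominatesIncrementsOn (fun t => M * t) G (Ici 0)) (hG0 : G 0 = 0) :
    DominatesIncrementsOn (fun t => (α ^ 2)⁻¹ * (M * t) - M * β * (t ^ 2)⁻¹)
      (fun t => (t ^ 2)⁻¹ • G t) (Icc α β) := by
  have hanti : AntitoneOn (fun t : ℝ => (t ^ 2)⁻¹) (Icc α β) := fun s hs t _ hst =>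
    inv_anti₀ (by nlinarith [hs.1]) (pow_le_pow_left₀ (hα.le.trans hs.1) hst 2)
  have hinv : ∀ t ∈ Icc α β, ‖(t ^ 2)⁻¹‖ ≤ (α ^ 2)⁻¹ := fun t ht => by
    rw [norm_inv, norm_pow, Real.norm_of_nonneg (hα.le.trans ht.1)]
    exact inv_anti₀ (by positivity) (pow_le_pow_left₀ hα.le ht.1 2)
  have hM : 0 ≤ M := by
    simpa using hG.monotoneOn (mem_Ici.2 le_rfl) (mem_Ici.2 zero_le_one) zero_le_one
  have hGle : ∀ t ∈ Icc α β, ‖G t‖ ≤ M * β := fun t ht =>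
    (norm_le_mul_of_dominatesIncrementsOn hG hG0 (hα.le.trans ht.1)).trans
      (mul_le_mul_of_nonneg_left ht.2 hM)
  have := hanti.dominatesIncrementsOn_neg.smul (hG.mono fun t ht => hα.le.trans ht.1) hinv hGle
  simpa [sub_eq_add_neg] using this

end InvSqSmul

theorem inv_sq_control_sub_le {M α β s t : ℝ} (hM : 0 ≤ M) (hα : 0 < α) (hs : α ≤ s) (hst : s ≤ t)
    (ht : t ≤ β) :
    (α ^ 2)⁻¹ * (M * t) - M * β * (t ^ 2)⁻¹ - ((α ^ 2)⁻¹ * (M * s) - M * β * (s ^ 2)⁻¹)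
      ≤ 2 * M * β / α ^ 2 - M / α := by
  have hβ : 0 < β := by linarith
  have hs' : (s ^ 2)⁻¹ ≤ (α ^ 2)⁻¹ := inv_anti₀ (by positivity) (pow_le_pow_left₀ hα.le hs 2)
  have ht' : (β ^ 2)⁻¹ ≤ (t ^ 2)⁻¹ :=
    inv_anti₀ (by nlinarith) (pow_le_pow_left₀ (by linarith) ht 2)
  calc _ = (α ^ 2)⁻¹ * M * (t - s) + M * β * ((s ^ 2)⁻¹ - (t ^ 2)⁻¹) := by ring
    _ ≤ (α ^ 2)⁻¹ * M * (β - α) + M * β * ((α ^ 2)⁻¹ - (β ^ 2)⁻¹) := by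
        gcongr
    _ = 2 * M * β / α ^ 2 - M / α - M / β := by field_simp; ring
    _ ≤ 2 * M * β / α ^ 2 - M / α := by linarith [div_nonneg hM hβ.le]

theorem smul_eq_smul_projIcc {𝕜 E : Type*} [Zero E] [SMulZeroClass 𝕜 E] {α β : ℝ} (h : α ≤ β)
    (u : ℝ → 𝕜) {v : ℝ → E} (hv : ∀ t ∉ Icc α β, v t = 0) (t : ℝ) :
    u t • v t = u (projIcc α β h t) • v t := by
  by_cases ht : t ∈ Icc α β
  · rw [projIcc_of_mem h ht]
  · rw [hv t ht, smul_zero, smul_zero]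

theorem le_infDist_Ico_of_notMem {a b r x : ℝ} (hab : a < b) (hx : x ∉ Ico (a - r) (b + r)) :
    r ≤ infDist x (Ico a b) := by
  rw [le_infDist (nonempty_Ico.2 hab)]
  intro y hy
  rw [mem_Ico, not_and_or, not_le, not_lt] at hx
  rw [Real.dist_eq, le_abs]
  rcases hx with hx | hx
  · right; linarith [hy.1]
  · left; linarith [hy.2]

theorem Ico_subset_closedBall_infDist_add {a h : ℝ} (hh : 0 ≤ h) (x : ℝ) :
    Ico a (a + h) ⊆ closedBall x (infDist x (Ico a (a + h)) + h) := fun _ hy => by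
  rw [mem_closedBall, dist_comm]
  have := dist_le_infDist_add_diam (x := x) (isBounded_Ico a (a + h)) hy
  rwa [Real.diam_Ico (by linarith), add_sub_cancel_left] at this

theorem varNorm_Qbil_le {ρ : ℝ} (hρ : 1 ≤ ρ) {b g : ℝ → ℂ} {x d D : ℝ} (hd : 0 < d) (hdD : d ≤ D)
    (hb : Integrable b) (hb0 : ∫ y, b y = 0) (hb_far : ∀ y ∈ support b, d ≤ dist x y)
    (hb_near : support b ⊆ closedBall x D) (hg : Integrable g) (hg2 : ∀ᵐ y, ‖g y‖ ≤ 2) :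
    varNorm ρ (Ioi 0) (fun t => Qbil b g t x) ≤ ENNReal.ofReal (2 * (∫ y, ‖b y‖) * D / d ^ 2) := by
  set Φ : ℝ → ℂ := fun t => (t ^ 2)⁻¹ • centeredIntegral g x t
  have hdD2 : 2 * d ≤ 2 * D := by linarith
  set cl : ℝ → ℝ := fun t => projIcc (2 * d) (2 * D) hdD2 t
  have hcl : MapsTo cl (Ioi 0) (Icc (2 * d) (2 * D)) := fun t _ => (projIcc _ _ _ t).2
  have hcl_mono : Monotone cl := fun _ _ hst => Subtype.mono_coe _ (monotone_projIcc hdD2 hst)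
  have hG := dominatesIncrementsOn_centeredIntegral_of_norm_le hg hg2 x
  have hG0 := centeredIntegral_zero g x
  have hΦ := (dominatesIncrementsOn_inv_sq_smul (β := 2 * D) (by positivity) hG hG0).comp_monotone
    hcl_mono hcl
  have hΦle : ∀ t ∈ Ioi 0, ‖Φ (cl t)‖ ≤ 2 / (2 * d) := fun t ht =>
    (norm_inv_sq_smul_le hG hG0 (by linarith [(hcl ht).1])).trans (by gcongr; exact (hcl ht).1)
  have hMosc : ∀ s ∈ Ioi (0 : ℝ), ∀ t ∈ Ioi 0, s ≤ t →
      centeredIntegral (‖b ·‖) x t - centeredIntegral (‖b ·‖) x s ≤ ∫ y, ‖b y‖ :=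
    fun s _ t _ _ => by
      linarith [centeredIntegral_le_integral hb.norm (fun y => norm_nonneg (b y)) x t,
        centeredIntegral_nonneg (fun y => norm_nonneg (b y)) x s]
  have hvanish : ∀ t ∉ Icc (2 * d) (2 * D), centeredIntegral b x t = 0 := fun t ht => by
    rcases not_and_or.1 ht with ht | ht
    · exact centeredIntegral_eq_zero_of_le_dist hb_far (not_le.1 ht).le
    · rw [centeredIntegral_eq_integral hb_near (not_le.1 ht).le, hb0]
  -- Clamping `t` in the factor `Φ` does not change `Q_t`, since `centeredIntegral b x` vanishes
  -- off `[2d, 2D]`; it makes that factor bounded, with controlled increments, on all of `(0, ∞)`.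
  have hQ : (fun t => Qbil b g t x) = fun t => Φ (cl t) • centeredIntegral b x t := by
    ext t
    rw [Qbil_eq_smul_mul, ← smul_eq_mul]
    exact smul_eq_smul_projIcc hdD2 Φ hvanish t
  rw [hQ]
  refine (varNorm_smul_le hρ hΦ ((dominatesIncrementsOn_centeredIntegral hb x).mono
    (subset_univ _)) hΦle (fun t _ => norm_centeredIntegral_le hb x t)
    (fun s hs t ht hst => inv_sq_control_sub_le zero_le_two (by positivity) (hcl hs).1
      (hcl_mono hst) (hcl ht).2) hMosc).trans_eq ?_
  congr 1
  field_simp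
  ring

/-- variation estimate for `Q_t(b,g)` outside the concentric triple of the
supporting interval of a mean-zero atom `b`, with `g ∈ L¹ ∩ L^∞`, `‖g‖_∞ ≤ 2`, `‖g‖₁ ≤ 1`. -/
theorem varNorm_Qbil_atom :
    ∃ C : ℝ, 0 < C ∧ ∀ ρ : ℝ, 1 ≤ ρ → ∀ (a h : ℝ), 0 < h → ∀ (b g : ℝ → ℂ),
      Integrable b volume → Function.support b ⊆ Set.Ico a (a + h) →
      (∫ y, b y) = 0 →
      Integrable g volume → (∀ᵐ y ∂volume, ‖g y‖ ≤ 2) → (∫ y, ‖g y‖) ≤ 1 →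
      ∀ x : ℝ, x ∉ Set.Ico (a - h) (a + 2 * h) →
        varNorm ρ (Set.Ioi (0:ℝ)) (fun t => Qbil b g t x) ≤
          ENNReal.ofReal (C * (∫ y, ‖b y‖) *
            (Metric.infDist x (Set.Ico a (a + h)) + h) /
              (Metric.infDist x (Set.Ico a (a + h))) ^ 2) := by
  refine ⟨2, two_pos, fun ρ hρ a h hh b g hb hsupp hb0 hg hg2 _ x hx => ?_⟩
  have hhd : h ≤ infDist x (Ico a (a + h)) :=
    le_infDist_Ico_of_notMem (by linarith) (by rwa [add_assoc, ← two_mul])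
  exact varNorm_Qbil_le hρ (hh.trans_le hhd) (by linarith) hb hb0
    (fun _ hy => infDist_le_dist_of_mem (hsupp hy))
    (hsupp.trans (Ico_subset_closedBall_infDist_add hh.le x)) hg hg2
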